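/- arXiv:2402.10165 — 2 statements merged into one kernel-verified Lean document; each statement's English description precedes it below -/
import Mathlib

section
/- Let a group G act by isometries on a proper geodesic metric space (X,d) with basepoint o, and let h ∈ G be a contracting element. Then there exists ε > 0 such that for all integers l < m < n and every geodesic segment α from h^l·o to h^n·o, one has d(h^m·o, α) ≤ ε. -/
open Metric

/-- A geodesic parametrisation from `x` to `y`, with image `s`: an isometric embedding of
the interval `[0, dist x y]` sending the endpoints to `x` and `y`. -/
def IsGeodesicFromTo {X : Type*} [MetricSpace X] (s : Set X) (x y : X) : Prop :=
  ∃ γ : ℝ → X,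
    (∀ u ∈ Set.Icc (0 : ℝ) (dist x y), ∀ v ∈ Set.Icc (0 : ℝ) (dist x y),
      dist (γ u) (γ v) = |u - v|) ∧
    γ 0 = x ∧ γ (dist x y) = y ∧ s = γ '' Set.Icc (0 : ℝ) (dist x y)

/-- A geodesic segment: the image of an isometric embedding of a compact real interval. -/
def IsGeodesicSegment {X : Type*} [MetricSpace X] (s : Set X) : Prop :=
  ∃ x y : X, IsGeodesicFromTo s x y

/-- A metric space is geodesic if any two points are joined by a geodesic segment. -/
def GeodesicSpace (X : Type*) [MetricSpace X] : Prop :=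
  ∀ x y : X, ∃ s : Set X, IsGeodesicFromTo s x y

/-- Closest point projection of a point to a subset:
`π_Y(x) = {y ∈ closure Y | d(x,y) = d(x,Y)}`. -/
def projSet {X : Type*} [MetricSpace X] (Y : Set X) (x : X) : Set X :=
  {y ∈ closure Y | dist x y = Metric.infDist x Y}

/-- Closest point projection of a subset `B`: `π_Y(B) = ⋃_{x ∈ B} π_Y(x)`. -/
def projSetOf {X : Type*} [MetricSpace X] (Y B : Set X) : Set X :=
  ⋃ x ∈ B, projSet Y x

/-- The closed `r`-neighbourhood `N_r(A) = {x | d(x,A) ≤ r}`. -/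
def ptNbhd {X : Type*} [MetricSpace X] (r : ℝ) (A : Set X) : Set X :=
  {x | Metric.infDist x A ≤ r}

/-- `Y` is `C`-contracting : for every geodesic segment `s` with `d(s,Y) ≥ C`,
one has `diam (π_Y(s)) ≤ C`. -/
def IsContractingWith {X : Type*} [MetricSpace X] (C : ℝ) (Y : Set X) : Prop :=
  ∀ s : Set X, IsGeodesicSegment s → (∀ x ∈ s, C ≤ Metric.infDist x Y) →
    ∀ p ∈ projSetOf Y s, ∀ q ∈ projSetOf Y s, dist p q ≤ C

/-- `Y` is contracting if it is `C`-contracting for some `C ≥ 0`. -/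
def IsContractingSet {X : Type*} [MetricSpace X] (Y : Set X) : Prop :=
  ∃ C : ℝ, 0 ≤ C ∧ IsContractingWith C Y

/-- `Y` and `Z` have `R`-bounded intersection for some gauge function `R`:
`diam (N_r(Y) ∩ N_r(Z)) ≤ R r` for all `r ≥ 0`. -/
def HasBoundedIntersection {X : Type*} [MetricSpace X] (Y Z : Set X) : Prop :=
  ∃ R : ℝ → ℝ, ∀ r : ℝ, 0 ≤ r →
    ∀ p ∈ ptNbhd r Y ∩ ptNbhd r Z, ∀ q ∈ ptNbhd r Y ∩ ptNbhd r Z, dist p q ≤ R r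

/-- The orbit `⟨g⟩ · o` of the basepoint under the cyclic subgroup generated by `g`. -/
def cyclicOrbit {G X : Type*} [Group G] [MetricSpace X] [MulAction G X] (g : G) (o : X) :
    Set X :=
  Set.range fun n : ℤ => (g ^ n) • o

/-- `g` is a contracting element for the action: the orbit `⟨g⟩ · o` is a contracting
subset and `n ↦ gⁿ • o` is a quasi-isometric embedding of `ℤ`. -/
def IsContractingElement {G X : Type*} [Group G] [MetricSpace X] [MulAction G X]
    (o : X) (g : G) : Prop :=
  IsContractingSet (cyclicOrbit g o) ∧
    ∃ K c : ℝ, 1 ≤ K ∧ 0 ≤ c ∧ ∀ m n : ℤ,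
      |(m : ℝ) - (n : ℝ)| / K - c ≤ dist ((g ^ m) • o) ((g ^ n) • o) ∧
      dist ((g ^ m) • o) ((g ^ n) • o) ≤ K * |(m : ℝ) - (n : ℝ)| + c

/-- Two elements are weakly independent if their cyclic orbits have bounded intersection. -/
def WeaklyIndependent {G X : Type*} [Group G] [MetricSpace X] [MulAction G X]
    (o : X) (g h : G) : Prop :=
  HasBoundedIntersection (cyclicOrbit g o) (cyclicOrbit h o)

/-- The action of `G` on `X` has the contracting property: there exist two weakly
independent contracting elements. -/
def ContractingProperty (G : Type*) (X : Type*) [Group G] [MetricSpace X] [MulAction G X]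
    (o : X) : Prop :=
  ∃ g h : G, IsContractingElement o g ∧ IsContractingElement o h ∧ WeaklyIndependent o g h

/-- Stable translation length `ℓ_d(g) = lim_n d(o, gⁿ • o)/n`; by subadditivity (Fekete's
lemma) the limit exists and equals the infimum below. -/
noncomputable def stableLength {G X : Type*} [Group G] [MetricSpace X] [MulAction G X]
    (o : X) (g : G) : ℝ :=
  ⨅ n : ℕ+, dist o ((g ^ (n : ℕ)) • o) / ((n : ℕ) : ℝ)

lemma aux_projSet_nonempty {X : Type*} [MetricSpace X] [ProperSpace X] (Y : Set X)
    (hY : Y.Nonempty) (x : X) : ∃ p, p ∈ projSet Y x := by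
  obtain ⟨p, hp, hd⟩ := isClosed_closure.exists_infDist_eq_dist (hY.closure) x
  exact ⟨p, hp, by rw [← hd, infDist_closure]⟩

lemma aux_subsegment {X : Type*} [MetricSpace X] (γ : ℝ → X) (x y : X)
    (hγ : ∀ u ∈ Set.Icc (0:ℝ) (dist x y), ∀ v ∈ Set.Icc (0:ℝ) (dist x y),
      dist (γ u) (γ v) = |u - v|)
    (t1 t2 : ℝ) (h0 : 0 ≤ t1) (h12 : t1 ≤ t2) (h2 : t2 ≤ dist x y) :
    IsGeodesicSegment (γ '' Set.Icc t1 t2) := by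
  have hmem : ∀ u ∈ Set.Icc (0:ℝ) (t2 - t1), t1 + u ∈ Set.Icc (0:ℝ) (dist x y) := by
    rintro u ⟨hu0, hu1⟩
    constructor <;> nlinarith
  have hd : dist (γ t1) (γ t2) = t2 - t1 := by
    rw [hγ t1 ⟨h0, le_trans h12 h2⟩ t2 ⟨le_trans h0 h12, h2⟩, abs_of_nonpos (by linarith)]
    ring
  refine ⟨γ t1, γ t2, fun u => γ (t1 + u), ?_, by simp, ?_, ?_⟩
  · rw [hd]
    intro u hu v hv
    rw [hγ _ (hmem u hu) _ (hmem v hv)]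
    congr 1; ring
  · rw [hd]; congr 1; ring
  · rw [hd]
    have himg : (fun u => t1 + u) '' Set.Icc (0:ℝ) (t2 - t1) = Set.Icc t1 t2 := by
      rw [Set.image_const_add_Icc]; congr 1 <;> ring
    calc γ '' Set.Icc t1 t2 = γ '' ((fun u => t1 + u) '' Set.Icc (0:ℝ) (t2 - t1)) := by
          rw [himg]
      _ = (fun u => γ (t1 + u)) '' Set.Icc (0:ℝ) (t2 - t1) := by
          rw [← Set.image_comp]; rfl

lemma aux_claim1 {X : Type*} [MetricSpace X] [ProperSpace X] (Y : Set X) (hYne : Y.Nonempty)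
    (C0 C : ℝ) (hC0C : C0 ≤ C) (h1C : 1 ≤ C) (hcontr : IsContractingWith C0 Y)
    (x y : X) (hx : x ∈ Y) (hy : y ∈ Y) (γ : ℝ → X)
    (hγiso : ∀ u ∈ Set.Icc (0:ℝ) (dist x y), ∀ v ∈ Set.Icc (0:ℝ) (dist x y),
      dist (γ u) (γ v) = |u - v|)
    (hγ0 : γ 0 = x) (hγL : γ (dist x y) = y)
    (t : ℝ) (ht : t ∈ Set.Icc (0:ℝ) (dist x y)) : infDist (γ t) Y ≤ 4 * C := by
  set L := dist x y with hLdef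
  set f : ℝ → ℝ := fun u => infDist (γ u) Y with hfdef
  have hL0 : 0 ≤ L := dist_nonneg
  have hLip : ∀ u ∈ Set.Icc (0:ℝ) L, ∀ v ∈ Set.Icc (0:ℝ) L, f u ≤ f v + |u - v| := by
    intro u hu v hv
    calc f u ≤ f v + dist (γ u) (γ v) := infDist_le_infDist_add_dist
      _ = f v + |u - v| := by rw [hγiso u hu v hv]
  have hf0 : f 0 = 0 := by simp only [hfdef, hγ0]; exact infDist_zero_of_mem hx
  have hfL : f L = 0 := by simp only [hfdef, hγL]; exact infDist_zero_of_mem hy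
  rcases le_or_gt (f t) C with hft | hft
  · linarith
  -- f t > C : find maximal interval [t1, t2] ∋ t with f ≥ C
  obtain ⟨ht0, htL⟩ := ht
  set S1 : Set ℝ := {u | u ∈ Set.Icc (0:ℝ) t ∧ f u ≤ C} with hS1def
  have h0S1 : (0:ℝ) ∈ S1 := ⟨⟨le_refl _, ht0⟩, by rw [hf0]; linarith⟩
  have hS1ne : S1.Nonempty := ⟨0, h0S1⟩
  have hS1bdd : BddAbove S1 := ⟨t, fun u hu => hu.1.2⟩
  set t1 := sSup S1 with ht1def
  have ht1mem : t1 ∈ Set.Icc (0:ℝ) t := ⟨le_csSup hS1bdd h0S1, csSup_le hS1ne fun u hu => hu.1.2⟩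
  have ht1L : t1 ∈ Set.Icc (0:ℝ) L := ⟨ht1mem.1, le_trans ht1mem.2 htL⟩
  have hft1 : f t1 ≤ C := by
    refine le_of_forall_pos_le_add fun ε hε => ?_
    obtain ⟨u, huS, hu⟩ := exists_lt_of_lt_csSup hS1ne (show t1 - ε < t1 by linarith)
    have huL : u ∈ Set.Icc (0:ℝ) L := ⟨huS.1.1, le_trans huS.1.2 htL⟩
    have := hLip t1 ht1L u huL
    have habs : |t1 - u| ≤ ε := by
      rw [abs_of_nonneg (by linarith [le_csSup hS1bdd huS])]
      linarith
    linarith [huS.2]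
  have ht1t : t1 < t := lt_of_le_of_ne ht1mem.2 (fun he => by rw [he] at hft1; linarith)
  have hS1gt : ∀ u, t1 < u → u ≤ t → C < f u := by
    intro u hu1 hut
    by_contra hle
    push_neg at hle
    exact absurd (le_csSup hS1bdd ⟨⟨by linarith [ht1mem.1], hut⟩, hle⟩) (not_le.2 hu1)
  set S2 : Set ℝ := {u | u ∈ Set.Icc t L ∧ f u ≤ C} with hS2def
  have hLS2 : L ∈ S2 := ⟨⟨htL, le_refl _⟩, by rw [hfL]; linarith⟩
  have hS2ne : S2.Nonempty := ⟨L, hLS2⟩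
  have hS2bdd : BddBelow S2 := ⟨t, fun u hu => hu.1.1⟩
  set t2 := sInf S2 with ht2def
  have ht2mem : t2 ∈ Set.Icc t L := ⟨le_csInf hS2ne fun u hu => hu.1.1, csInf_le hS2bdd hLS2⟩
  have ht2L : t2 ∈ Set.Icc (0:ℝ) L := ⟨le_trans ht0 ht2mem.1, ht2mem.2⟩
  have hft2 : f t2 ≤ C := by
    refine le_of_forall_pos_le_add fun ε hε => ?_
    obtain ⟨u, huS, hu⟩ := exists_lt_of_csInf_lt hS2ne (show sInf S2 < t2 + ε by rw [← ht2def]; linarith)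
    have huL : u ∈ Set.Icc (0:ℝ) L := ⟨le_trans ht0 huS.1.1, huS.1.2⟩
    have := hLip t2 ht2L u huL
    have habs : |t2 - u| ≤ ε := by
      rw [abs_of_nonpos (by linarith [csInf_le hS2bdd huS])]
      linarith
    linarith [huS.2]
  have htt2 : t < t2 := lt_of_le_of_ne ht2mem.1 (fun he => by rw [← he] at hft2; linarith)
  have hS2gt : ∀ u, t ≤ u → u < t2 → C < f u := by
    intro u htu hu2
    by_contra hle
    push_neg at hle
    exact absurd (csInf_le hS2bdd ⟨⟨htu, by linarith [ht2mem.2]⟩, hle⟩) (not_le.2 hu2)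
  -- C ≤ f on [t1, t2]
  have hfge : ∀ u ∈ Set.Icc t1 t2, C ≤ f u := by
    intro u ⟨hu1, hu2⟩
    rcases eq_or_lt_of_le hu1 with he1 | hlt1
    · -- u = t1
      rw [← he1]
      refine le_of_forall_pos_le_add fun ε hε => ?_
      set u' := min t (t1 + ε) with hu'def
      have hu'gt : t1 < u' := lt_min ht1t (by linarith)
      have hu't : u' ≤ t := min_le_left _ _
      have hu'L : u' ∈ Set.Icc (0:ℝ) L := ⟨by linarith [ht1L.1], le_trans hu't htL⟩
      have h1 := hS1gt u' hu'gt hu't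
      have h2 := hLip u' hu'L t1 ht1L
      have habs : |u' - t1| ≤ ε := by
        rw [abs_of_nonneg (by linarith)]
        linarith [min_le_right t (t1 + ε)]
      linarith
    rcases eq_or_lt_of_le hu2 with he2 | hlt2
    · -- u = t2
      rw [he2]
      refine le_of_forall_pos_le_add fun ε hε => ?_
      set u' := max t (t2 - ε) with hu'def
      have hu'lt : u' < t2 := max_lt htt2 (by linarith)
      have hu't : t ≤ u' := le_max_left _ _
      have hu'L : u' ∈ Set.Icc (0:ℝ) L := ⟨le_trans ht0 hu't, by linarith [ht2L.2]⟩
      have h1 := hS2gt u' hu't hu'lt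
      have h2 := hLip u' hu'L t2 ht2L
      have habs : |u' - t2| ≤ ε := by
        rw [abs_of_nonpos (by linarith)]
        linarith [le_max_right t (t2 - ε)]
      linarith
    -- t1 < u < t2
    rcases le_or_gt u t with hut | htu
    · exact le_of_lt (hS1gt u hlt1 hut)
    · exact le_of_lt (hS2gt u (le_of_lt htu) hlt2)
  -- apply the contracting property to γ '' [t1, t2]
  have ht12 : t1 ≤ t2 := by linarith
  have hseg : IsGeodesicSegment (γ '' Set.Icc t1 t2) :=
    aux_subsegment γ x y hγiso t1 t2 ht1L.1 ht12 ht2L.2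
  have hhyp : ∀ z ∈ γ '' Set.Icc t1 t2, C0 ≤ infDist z Y := by
    rintro z ⟨u, hu, rfl⟩
    exact le_trans hC0C (hfge u hu)
  obtain ⟨p, hp⟩ := aux_projSet_nonempty Y hYne (γ t1)
  obtain ⟨q, hq⟩ := aux_projSet_nonempty Y hYne (γ t2)
  have hpmem : p ∈ projSetOf Y (γ '' Set.Icc t1 t2) :=
    Set.mem_biUnion ⟨t1, ⟨le_refl _, ht12⟩, rfl⟩ hp
  have hqmem : q ∈ projSetOf Y (γ '' Set.Icc t1 t2) :=
    Set.mem_biUnion ⟨t2, ⟨ht12, le_refl _⟩, rfl⟩ hq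
  have hpq : dist p q ≤ C0 := hcontr _ hseg hhyp p hpmem q hqmem
  have hd12 : dist (γ t1) (γ t2) = t2 - t1 := by
    rw [hγiso t1 ht1L t2 ht2L, abs_of_nonpos (by linarith)]; ring
  have hdp : dist (γ t1) p = f t1 := hp.2
  have hdq : dist (γ t2) q = f t2 := hq.2
  have h3C : t2 - t1 ≤ 3 * C := by
    have := dist_triangle4 (γ t1) p q (γ t2)
    rw [hd12] at this
    rw [dist_comm q (γ t2)] at this
    linarith
  have := hLip t ⟨ht0, htL⟩ t1 ht1L
  have habs : |t - t1| ≤ 3 * C := by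
    rw [abs_of_nonneg (by linarith)]
    linarith
  linarith

/-- fellow-travelling of the cyclic orbit of a contracting element: there
is `ε > 0` such that for all `l < m < n` and every geodesic segment `α` from `h^l • o`
to `h^n • o`, one has `d(h^m • o, α) ≤ ε`. -/
theorem fellow_travel_property {G X : Type*} [Group G]
    [MetricSpace X] [ProperSpace X] [MulAction G X]
    (hiso : ∀ g : G, Isometry fun x : X => g • x)
    (hgeo : GeodesicSpace X) (o : X)
    (h : G) (hc : IsContractingElement o h) :
    ∃ ε : ℝ, 0 < ε ∧ ∀ l m n : ℤ, l < m → m < n → ∀ s : Set X,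
      IsGeodesicFromTo s ((h ^ l) • o) ((h ^ n) • o) →
      Metric.infDist ((h ^ m) • o) s ≤ ε := by
  obtain ⟨⟨C0, hC00, hcontr⟩, K, c, hK, hcge, hQI⟩ := hc
  set Y := cyclicOrbit h o with hYdef
  have hYne : Y.Nonempty := ⟨(h ^ (0:ℤ)) • o, ⟨0, rfl⟩⟩
  set C : ℝ := max C0 1 with hCdef
  have h1C : 1 ≤ C := le_max_right _ _
  have hC0C : C0 ≤ C := le_max_left _ _
  set Δ : ℝ := K * (8 * C + 3 + c) with hΔdef
  have hΔ0 : 0 ≤ Δ := by nlinarith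
  refine ⟨K * Δ + c + 4 * C + 2, by nlinarith, ?_⟩
  intro l m n hlm hmn s hs
  obtain ⟨γ, hγiso, hγ0, hγL, hsimg⟩ := hs
  set L := dist ((h ^ l) • o) ((h ^ n) • o) with hLdef
  have hL0 : 0 ≤ L := dist_nonneg
  have h4 : ∀ t ∈ Set.Icc (0:ℝ) L, infDist (γ t) Y ≤ 4 * C :=
    fun t ht => aux_claim1 Y hYne C0 C hC0C h1C hcontr _ _ ⟨l, rfl⟩ ⟨n, rfl⟩ γ hγiso hγ0 hγL t ht
  have hnear : ∀ t ∈ Set.Icc (0:ℝ) L, ∃ k : ℤ, dist (γ t) ((h ^ k) • o) ≤ 4 * C + 1 := by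
    intro t ht
    have : infDist (γ t) Y < 4 * C + 1 := lt_of_le_of_lt (h4 t ht) (by linarith)
    obtain ⟨z, hz, hdz⟩ := (infDist_lt_iff hYne).1 this
    obtain ⟨k, rfl⟩ := hz
    exact ⟨k, le_of_lt hdz⟩
  set M : ℕ := Nat.ceil L + 1 with hMdef
  set tt : ℕ → ℝ := fun j => min (j : ℝ) L with httdef
  have htt_mem : ∀ j : ℕ, tt j ∈ Set.Icc (0:ℝ) L :=
    fun j => ⟨le_min (Nat.cast_nonneg j) hL0, min_le_right _ _⟩
  have hkk : ∀ j : ℕ, ∃ k : ℤ, dist (γ (tt j)) ((h ^ k) • o) ≤ 4 * C + 1 ∧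
      (j = 0 → k = l) ∧ (M ≤ j → k = n) := by
    intro j
    rcases Nat.eq_zero_or_pos j with hj0 | hjpos
    · refine ⟨l, ?_, fun _ => rfl, fun hMj => absurd hMj (by omega)⟩
      subst hj0
      have : tt 0 = 0 := by simp [httdef, hL0]
      rw [this, hγ0, dist_self]
      linarith
    rcases le_or_gt M j with hMj | hjM
    · refine ⟨n, ?_, fun h0 => absurd h0 (by omega), fun _ => rfl⟩
      have hLj : L ≤ (j : ℝ) := by
        calc L ≤ (Nat.ceil L : ℝ) := Nat.le_ceil L
          _ ≤ (j : ℝ) := by exact_mod_cast Nat.le_of_lt_succ (Nat.lt_succ_of_le (le_trans (by omega) (le_refl j)))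
      have : tt j = L := min_eq_right hLj
      rw [this, hγL, dist_self]
      linarith
    obtain ⟨k, hk⟩ := hnear (tt j) (htt_mem j)
    exact ⟨k, hk, fun h0 => absurd h0 (by omega), fun hMj => absurd hMj (by omega)⟩
  choose k hkd hk0 hkM using hkk
  have htt_step : ∀ j : ℕ, |tt j - tt (j + 1)| ≤ 1 := by
    intro j
    have h1 : tt j ≤ tt (j + 1) := min_le_min (by exact_mod_cast Nat.le_succ j) (le_refl L)
    have h2 : tt (j + 1) ≤ tt j + 1 := by
      have e : tt (j + 1) = min ((j : ℝ) + 1) L := by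
        simp only [httdef]
        push_cast
        rfl
      rcases le_total ((j : ℝ)) L with hjL | hLj
      · rw [e, show tt j = (j : ℝ) from min_eq_left hjL]
        exact min_le_left _ _
      · rw [e, show tt j = L from min_eq_right hLj]
        linarith [min_le_right ((j : ℝ) + 1) L]
    rw [abs_of_nonpos (by linarith)]
    linarith
  have hstep : ∀ j : ℕ, |(k j : ℝ) - (k (j + 1) : ℝ)| ≤ Δ := by
    intro j
    have hd : dist ((h ^ (k j)) • o) ((h ^ (k (j+1))) • o) ≤ 8 * C + 3 := by
      have hdγ : dist (γ (tt j)) (γ (tt (j+1))) = |tt j - tt (j+1)| :=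
        hγiso _ (htt_mem j) _ (htt_mem (j+1))
      calc dist ((h ^ (k j)) • o) ((h ^ (k (j+1))) • o)
          ≤ dist ((h ^ (k j)) • o) (γ (tt j)) + dist (γ (tt j)) (γ (tt (j+1)))
            + dist (γ (tt (j+1))) ((h ^ (k (j+1))) • o) := dist_triangle4 _ _ _ _
        _ ≤ (4 * C + 1) + 1 + (4 * C + 1) := by
            refine add_le_add (add_le_add ?_ ?_) ?_
            · rw [dist_comm]; exact hkd j
            · rw [hdγ]; exact htt_step j
            · exact hkd (j+1)
        _ = 8 * C + 3 := by ring
    have hlow := (hQI (k j) (k (j+1))).1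
    have hK0 : (0:ℝ) < K := by linarith
    have : |(k j : ℝ) - (k (j+1) : ℝ)| / K ≤ 8 * C + 3 + c := by linarith
    calc |(k j : ℝ) - (k (j+1) : ℝ)| = |(k j : ℝ) - (k (j+1) : ℝ)| / K * K := by
          field_simp
      _ ≤ (8 * C + 3 + c) * K := mul_le_mul_of_nonneg_right this (le_of_lt hK0)
      _ = Δ := by rw [hΔdef]; ring
  -- discrete intermediate value
  have hP0 : k 0 ≤ m := by rw [hk0 0 rfl]; exact le_of_lt hlm
  set j0 : ℕ := Nat.findGreatest (fun j => k j ≤ m) M with hj0def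
  have hPj0 : k j0 ≤ m := by
    have := Nat.findGreatest_spec (P := fun j => k j ≤ m) (Nat.zero_le M) hP0
    exact this
  have hj0M : j0 ≤ M := Nat.findGreatest_le (P := fun j => k j ≤ m) M
  have hj0ltM : j0 < M := by
    rcases lt_or_eq_of_le hj0M with hlt | heq
    · exact hlt
    · exfalso
      rw [heq, hkM M (le_refl M)] at hPj0
      omega
  have hPnext : ¬ (k (j0 + 1) ≤ m) := by
    have := Nat.findGreatest_is_greatest (P := fun j => k j ≤ m) (n := M) (k := j0 + 1)
      (by rw [← hj0def]; omega) (by omega)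
    exact this
  have hmlt : m < k (j0 + 1) := by omega
  have habs : |(k j0 : ℝ) - (m : ℝ)| ≤ Δ := by
    have h1 : (k j0 : ℝ) ≤ (m : ℝ) := by exact_mod_cast hPj0
    have h2 : (m : ℝ) ≤ (k (j0 + 1) : ℝ) := by exact_mod_cast le_of_lt hmlt
    rw [abs_of_nonpos (by linarith)]
    have := hstep j0
    have h3 : (k (j0+1) : ℝ) - (k j0 : ℝ) ≤ Δ := by
      calc (k (j0+1) : ℝ) - (k j0 : ℝ) ≤ |(k j0 : ℝ) - (k (j0+1) : ℝ)| := by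
            rw [abs_sub_comm]; exact le_abs_self _
        _ ≤ Δ := this
    linarith
  -- conclude
  have hγmem : γ (tt j0) ∈ s := by
    rw [hsimg]
    exact ⟨tt j0, htt_mem j0, rfl⟩
  calc infDist ((h ^ m) • o) s ≤ dist ((h ^ m) • o) (γ (tt j0)) := infDist_le_dist_of_mem hγmem
    _ ≤ dist ((h ^ m) • o) ((h ^ (k j0)) • o) + dist ((h ^ (k j0)) • o) (γ (tt j0)) :=
        dist_triangle _ _ _
    _ ≤ (K * |(m : ℝ) - (k j0 : ℝ)| + c) + (4 * C + 1) := by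
        refine add_le_add ((hQI m (k j0)).2) ?_
        rw [dist_comm]; exact hkd j0
    _ ≤ (K * Δ + c) + (4 * C + 1) := by
        have : |(m : ℝ) - (k j0 : ℝ)| ≤ Δ := by rw [abs_sub_comm]; exact habs
        nlinarith
    _ ≤ K * Δ + c + 4 * C + 2 := by linarith
end

section
/- Let (X,d) be a C-coarsely convex geodesic metric space. Then for every isometry g of X, |ℓ_d(g) − μ_d(g)| ≤ 2C, where μ_d(g) = inf_{x ∈ X} d(x, g·x) is the minimal translation length and ℓ_d(g) = lim_{n→∞} d(o, g^n·o)/n is the stable translation length (independent of o ∈ X). Moreover, if a group G acts isometrically and cocompactly on X, then there exists a constant C' > 0 such that |ℓ_d(g) − ℓ_d^o(g)| ≤ C' for every g ∈ G, where ℓ_d^o(g) = inf_{x ∈ G·o} d(x, g·x) is the algebraic translation length with respect to a basepoint o ∈ X. -/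
open Metric

/-- A geodesic parametrisation of a segment from `x` to `y` (unit speed on
`[0, dist x y]`). -/
def IsGeodesicParam {X : Type*} [MetricSpace X] (γ : ℝ → X) (x y : X) : Prop :=
  (∀ u ∈ Set.Icc (0 : ℝ) (dist x y), ∀ v ∈ Set.Icc (0 : ℝ) (dist x y),
    dist (γ u) (γ v) = |u - v|) ∧ γ 0 = x ∧ γ (dist x y) = y

/-- A geodesic metric space is `C`-coarsely convex if midpoints of geodesic segments
satisfy `d(m₁,m₂) ≤ (d(x₁,x₂) + d(y₁,y₂))/2 + C`. -/
def CoarselyConvex (X : Type*) [MetricSpace X] (C : ℝ) : Prop :=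
  ∀ (x1 y1 x2 y2 : X) (γ1 γ2 : ℝ → X),
    IsGeodesicParam γ1 x1 y1 → IsGeodesicParam γ2 x2 y2 →
    dist (γ1 (dist x1 y1 / 2)) (γ2 (dist x2 y2 / 2)) ≤
      (dist x1 x2 + dist y1 y2) / 2 + C

/-- Stable translation length of a self-map, `lim_n d(p, gⁿ(p))/n`; for an isometry the
limit exists by subadditivity (Fekete) and equals this infimum. -/
noncomputable def mapStableLength {X : Type*} [MetricSpace X] (g : X → X) (p : X) : ℝ :=
  ⨅ n : ℕ+, dist p (g^[(n : ℕ)] p) / ((n : ℕ) : ℝ)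

lemma aux_iter_isom {X : Type*} [MetricSpace X] {g : X → X} (hg : Isometry g) (n : ℕ) :
    Isometry (g^[n]) := by
  induction n with
  | zero => simpa using isometry_id
  | succ k ih => rw [Function.iterate_succ]; exact ih.comp hg

lemma aux_dist_iter_add {X : Type*} [MetricSpace X] {g : X → X} (hg : Isometry g)
    (p : X) (m n : ℕ) :
    dist p (g^[m + n] p) ≤ dist p (g^[m] p) + dist p (g^[n] p) := by
  rw [Function.iterate_add_apply]
  calc dist p (g^[m] (g^[n] p))
      ≤ dist p (g^[m] p) + dist (g^[m] p) (g^[m] (g^[n] p)) := dist_triangle _ _ _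
    _ = dist p (g^[m] p) + dist p (g^[n] p) := by
        rw [(aux_iter_isom hg m).dist_eq]

lemma aux_dist_iter_mul {X : Type*} [MetricSpace X] {g : X → X} (hg : Isometry g)
    (p : X) (q n : ℕ) :
    dist p (g^[q * n] p) ≤ q * dist p (g^[n] p) := by
  induction q with
  | zero => simp
  | succ k ih =>
    have h1 : (k + 1) * n = k * n + n := by ring
    rw [h1]
    have h2 := aux_dist_iter_add hg p (k * n) n
    push_cast
    linarith

lemma aux_midpoint_step {X : Type*} [MetricSpace X] {C : ℝ}
    (hgeo : GeodesicSpace X) (hconv : CoarselyConvex X C)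
    {h : X → X} (hh : Isometry h) (x : X) :
    ∃ m : X, dist m (h m) ≤ dist x (h (h x)) / 2 + C := by
  obtain ⟨s, γ, hγ, h0, hL, -⟩ := hgeo x (h x)
  set L := dist x (h x) with hLdef
  have hLnn : 0 ≤ L := dist_nonneg
  refine ⟨γ (L / 2), ?_⟩
  set γ2 : ℝ → X := fun t => h (γ (L - t)) with hγ2
  have hL2 : dist (h (h x)) (h x) = L := by
    rw [hh.dist_eq, dist_comm]
  have hp1 : IsGeodesicParam γ x (h x) := ⟨hγ, h0, hL⟩
  have hp2 : IsGeodesicParam γ2 (h (h x)) (h x) := by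
    refine ⟨?_, ?_, ?_⟩
    · intro u hu v hv
      rw [hL2] at hu hv
      have hu' : L - u ∈ Set.Icc (0 : ℝ) L := ⟨by linarith [hu.2], by linarith [hu.1]⟩
      have hv' : L - v ∈ Set.Icc (0 : ℝ) L := ⟨by linarith [hv.2], by linarith [hv.1]⟩
      show dist (h (γ (L - u))) (h (γ (L - v))) = |u - v|
      rw [hh.dist_eq, hγ _ hu' _ hv']
      rw [abs_sub_comm]
      congr 1
      ring
    · show h (γ (L - 0)) = h (h x)
      rw [sub_zero, hL]
    · show h (γ (L - dist (h (h x)) (h x))) = h x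
      rw [hL2, sub_self, h0]
  have := hconv x (h x) (h (h x)) (h x) γ γ2 hp1 hp2
  rw [hL2] at this
  have hmid : γ2 (L / 2) = h (γ (L / 2)) := by
    show h (γ (L - L / 2)) = h (γ (L / 2))
    congr 1
    ring_nf
  rw [hmid] at this
  have hzero : dist (h x) (h x) = 0 := dist_self _
  calc dist (γ (L / 2)) (h (γ (L / 2)))
      ≤ (dist x (h (h x)) + dist (h x) (h x)) / 2 + C := this
    _ = dist x (h (h x)) / 2 + C := by rw [hzero]; ring

lemma aux_pow_two_step {X : Type*} [MetricSpace X] {C : ℝ}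
    (hgeo : GeodesicSpace X) (hconv : CoarselyConvex X C)
    {g : X → X} (hg : Isometry g) :
    ∀ (k : ℕ) (x : X), ∃ y : X,
      dist y (g y) ≤ dist x (g^[2 ^ k] x) / 2 ^ k + (2 - 2 / 2 ^ k) * C := by
  intro k
  induction k with
  | zero =>
    intro x
    refine ⟨x, ?_⟩
    simp
  | succ k ih =>
    intro x
    obtain ⟨m, hm⟩ := aux_midpoint_step hgeo hconv (aux_iter_isom hg (2 ^ k)) x
    obtain ⟨y, hy⟩ := ih m
    refine ⟨y, ?_⟩
    have h2 : g^[2 ^ k] (g^[2 ^ k] x) = g^[2 ^ (k + 1)] x := by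
      rw [← Function.iterate_add_apply]
      congr 1
      rw [pow_succ, Nat.mul_two]
    rw [h2] at hm
    have hP : (0 : ℝ) < 2 ^ k := by positivity
    have hpow : (2 : ℝ) ^ (k + 1) = 2 * 2 ^ k := by ring
    rw [hpow]
    set P := (2 : ℝ) ^ k
    set d := dist x (g^[2 ^ (k + 1)] x)
    set dm := dist m (g^[2 ^ k] m)
    have key : (d / 2 + C) / P + (2 - 2 / P) * C = d / (2 * P) + (2 - 2 / (2 * P)) * C := by
      field_simp
      ring
    have hdm : dm / P ≤ (d / 2 + C) / P := by
      apply div_le_div_of_nonneg_right hm hP.le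
    linarith

lemma aux_mu_le {X : Type*} [MetricSpace X] {C : ℝ} (hC : 0 ≤ C)
    (hgeo : GeodesicSpace X) (hconv : CoarselyConvex X C)
    {g : X → X} (hg : Isometry g) (p : X) (n : ℕ) (hn : 0 < n) :
    (⨅ x : X, dist x (g x)) ≤ dist p (g^[n] p) / n + 2 * C := by
  haveI : Nonempty X := ⟨p⟩
  have hbdd : BddBelow (Set.range fun x : X => dist x (g x)) :=
    ⟨0, by rintro _ ⟨x, rfl⟩; exact dist_nonneg⟩
  have hmu_le : ∀ y : X, (⨅ x : X, dist x (g x)) ≤ dist y (g y) :=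
    fun y => ciInf_le hbdd y
  have hn' : ((n : ℝ)) ≠ 0 := by positivity
  have hnpos : (0 : ℝ) < n := by positivity
  have key : ∀ k : ℕ, (⨅ x : X, dist x (g x)) ≤
      dist p (g^[n] p) / n + n * dist p (g p) / 2 ^ k + 2 * C := by
    intro k
    obtain ⟨y, hy⟩ := aux_pow_two_step hgeo hconv hg k p
    have h2k : (0 : ℝ) < 2 ^ k := by positivity
    -- subadditive bound: dist p (g^[2^k] p) ≤ 2^k * (aₙ/n) + n * a₁
    set q := 2 ^ k / n with hq
    set r := 2 ^ k % n with hr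
    have hqr : n * q + r = 2 ^ k := Nat.div_add_mod (2 ^ k) n
    have h2 : dist p (g^[2 ^ k] p) ≤ dist p (g^[n * q] p) + dist p (g^[r] p) := by
      rw [← hqr]
      exact aux_dist_iter_add hg p _ _
    have h3 : dist p (g^[n * q] p) ≤ q * dist p (g^[n] p) := by
      rw [Nat.mul_comm]
      exact aux_dist_iter_mul hg p q n
    have h4 : dist p (g^[r] p) ≤ r * dist p (g p) := by
      have := aux_dist_iter_mul hg p r 1
      simpa using this
    have hrn : (r : ℝ) ≤ n := by
      exact_mod_cast (Nat.mod_lt _ hn).le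
    have h5 : dist p (g^[r] p) ≤ n * dist p (g p) := by
      have : (r : ℝ) * dist p (g p) ≤ n * dist p (g p) :=
        mul_le_mul_of_nonneg_right hrn dist_nonneg
      linarith
    have hqn : ((q * n : ℕ) : ℝ) ≤ (2 : ℝ) ^ k := by
      exact_mod_cast Nat.div_mul_le_self (2 ^ k) n
    have e1 : (q : ℝ) * dist p (g^[n] p) =
        ((q : ℝ) * (n : ℝ)) * (dist p (g^[n] p) / n) := by
      field_simp
    have h6 : (q : ℝ) * dist p (g^[n] p) ≤ 2 ^ k * (dist p (g^[n] p) / n) := by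
      rw [e1]
      refine mul_le_mul_of_nonneg_right ?_ (by positivity)
      push_cast at hqn
      linarith
    have h7 : dist p (g^[2 ^ k] p) ≤
        2 ^ k * (dist p (g^[n] p) / n) + n * dist p (g p) := by linarith
    have h8 : dist p (g^[2 ^ k] p) / 2 ^ k ≤
        dist p (g^[n] p) / n + n * dist p (g p) / 2 ^ k := by
      rw [div_le_iff₀ h2k]
      have : (dist p (g^[n] p) / n + n * dist p (g p) / 2 ^ k) * 2 ^ k
          = 2 ^ k * (dist p (g^[n] p) / n) + n * dist p (g p) := by
        field_simp
      rw [this]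
      exact h7
    have h9 : (2 - 2 / (2 : ℝ) ^ k) * C ≤ 2 * C := by
      have : (0 : ℝ) ≤ 2 / (2 : ℝ) ^ k := by positivity
      nlinarith
    have := hmu_le y
    linarith
  refine le_of_forall_pos_le_add fun ε hε => ?_
  obtain ⟨k, hk⟩ := pow_unbounded_of_one_lt ((n : ℝ) * dist p (g p) / ε) one_lt_two
  have h2k : (0 : ℝ) < 2 ^ k := by positivity
  have hsm : (n : ℝ) * dist p (g p) / 2 ^ k < ε := by
    rw [div_lt_iff₀ hε] at hk
    rw [div_lt_iff₀ h2k]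
    linarith
  have := key k
  linarith

lemma aux_ell_le_mu {X : Type*} [MetricSpace X]
    {g : X → X} (hg : Isometry g) (p : X) :
    mapStableLength g p ≤ ⨅ x : X, dist x (g x) := by
  haveI : Nonempty X := ⟨p⟩
  refine le_ciInf fun x => ?_
  refine le_of_forall_pos_le_add fun ε hε => ?_
  obtain ⟨n, hn⟩ := exists_nat_gt (2 * dist p x / ε)
  have hnn : (0 : ℝ) ≤ 2 * dist p x / ε := by positivity
  have hn0 : 0 < n := by
    by_contra hcon
    push_neg at hcon
    interval_cases n
    simp at hn
    linarith
  have hnpos : (0 : ℝ) < n := by exact_mod_cast hn0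
  have hbdd : BddBelow (Set.range fun m : ℕ+ =>
      dist p (g^[(m : ℕ)] p) / ((m : ℕ) : ℝ)) :=
    ⟨0, by rintro _ ⟨m, rfl⟩; positivity⟩
  have h1 : mapStableLength g p ≤ dist p (g^[n] p) / n :=
    ciInf_le hbdd (⟨n, hn0⟩ : ℕ+)
  have t1 : dist p (g^[n] p) ≤ dist p x + dist x (g^[n] x) + dist (g^[n] x) (g^[n] p) :=
    dist_triangle4 _ _ _ _
  have t2 : dist (g^[n] x) (g^[n] p) = dist p x := by
    rw [(aux_iter_isom hg n).dist_eq, dist_comm]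
  have t3 : dist x (g^[n] x) ≤ n * dist x (g x) := by
    have := aux_dist_iter_mul hg x n 1
    simpa using this
  have t4 : dist p (g^[n] p) ≤ 2 * dist p x + n * dist x (g x) := by linarith
  have h2d : 2 * dist p x < n * ε := by
    rw [div_lt_iff₀ hε] at hn
    linarith
  have t5 : dist p (g^[n] p) / n ≤ dist x (g x) + ε := by
    rw [div_le_iff₀ hnpos]
    nlinarith
  linarith

lemma aux_part1 {X : Type*} [MetricSpace X] {C : ℝ} (hC : 0 ≤ C)
    (hgeo : GeodesicSpace X) (hconv : CoarselyConvex X C)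
    {g : X → X} (hg : Isometry g) (p : X) :
    |mapStableLength g p - ⨅ x : X, dist x (g x)| ≤ 2 * C := by
  haveI : Nonempty X := ⟨p⟩
  have h1 := aux_ell_le_mu hg p
  have h2 : (⨅ x : X, dist x (g x)) - 2 * C ≤ mapStableLength g p := by
    refine le_ciInf fun n => ?_
    have := aux_mu_le hC hgeo hconv hg p (n : ℕ) n.pos
    linarith
  rw [abs_le]
  constructor <;> linarith

/-- in a `C`-coarsely convex geodesic space, the stable translation length
of any isometry differs from the minimal translation length by at most `2C`; and for a
cocompact isometric group action, the stable length differs from the algebraic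
translation length `ℓ^o` by a uniform constant. -/
theorem coarsely_convex_translation_lengths {G X : Type*} [Group G]
    [MetricSpace X] [MulAction G X]
    (C : ℝ) (hC : 0 ≤ C)
    (hgeo : GeodesicSpace X) (hconv : CoarselyConvex X C)
    (hiso : ∀ g : G, Isometry fun x : X => g • x)
    (o : X)
    (hcocompact : ∃ D : ℝ, 0 < D ∧
      ∀ x : X, Metric.infDist x (Set.range fun g : G => g • o) ≤ D) :
    (∀ g : X → X, Isometry g → ∀ p : X,
      |mapStableLength g p - ⨅ x : X, dist x (g x)| ≤ 2 * C) ∧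
    (∃ C' : ℝ, 0 < C' ∧ ∀ g : G,
      |stableLength o g - ⨅ h : G, dist (h • o) (g • h • o)| ≤ C') := by
  haveI : Nonempty X := ⟨o⟩
  obtain ⟨D, hD, hDall⟩ := hcocompact
  constructor
  · exact fun g hg p => aux_part1 hC hgeo hconv hg p
  · refine ⟨2 * C + 2 * (D + 1), by linarith, fun g => ?_⟩
    have heq : stableLength o g = mapStableLength (fun x : X => g • x) o := by
      unfold stableLength mapStableLength
      refine iInf_congr fun n => ?_
      rw [congrFun (smul_iterate g (n : ℕ)) o]
    have h1 : |mapStableLength (fun x : X => g • x) o - ⨅ x : X, dist x (g • x)| ≤ 2 * C :=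
      aux_part1 hC hgeo hconv (hiso g) o
    set μ := ⨅ x : X, dist x (g • x) with hμ
    set L := ⨅ h : G, dist (h • o) (g • h • o) with hLdef
    have hbddμ : BddBelow (Set.range fun x : X => dist x (g • x)) :=
      ⟨0, by rintro _ ⟨x, rfl⟩; exact dist_nonneg⟩
    have hbddL : BddBelow (Set.range fun h : G => dist (h • o) (g • h • o)) :=
      ⟨0, by rintro _ ⟨h, rfl⟩; exact dist_nonneg⟩
    have hμL : μ ≤ L := le_ciInf fun h => ciInf_le hbddμ (h • o)
    have hLμ : L - 2 * (D + 1) ≤ μ := by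
      refine le_ciInf fun x => ?_
      have hx := hDall x
      have hne : (Set.range fun g : G => g • o).Nonempty := ⟨(1 : G) • o, ⟨1, rfl⟩⟩
      have hlt : Metric.infDist x (Set.range fun g : G => g • o) < D + 1 := by linarith
      obtain ⟨y, hy, hyd⟩ := (Metric.infDist_lt_iff hne).mp hlt
      obtain ⟨h, rfl⟩ := hy
      have e1 : dist (g • x) (g • (h • o)) = dist x (h • o) := (hiso g).dist_eq x (h • o)
      have t : dist (h • o) (g • h • o) ≤
          dist (h • o) x + dist x (g • x) + dist (g • x) (g • (h • o)) :=
        dist_triangle4 _ _ _ _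
      have hL1 : L ≤ dist (h • o) (g • h • o) := ciInf_le hbddL h
      rw [e1, dist_comm (h • o) x] at t
      linarith
    rw [heq, abs_le]
    rw [abs_le] at h1
    constructor <;> linarith
end
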